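/- arXiv:math/0508219 — 3 statements merged into one kernel-verified Lean document; each statement's English description precedes it below -/
import Mathlib

section
/- For all real x and all y > 0, |Φ(x·y) − Φ(x)| ≤ 0.25 · max(|1 − y|, |1 − 1/y|), where Φ is the standard normal cumulative distribution function. -/
/-- The standard normal density. -/
noncomputable def stdNormalPDF (t : ℝ) : ℝ :=
  Real.exp (-t ^ 2 / 2) / Real.sqrt (2 * Real.pi)

/-- The standard normal cumulative distribution function. -/
noncomputable def stdNormalCDF (x : ℝ) : ℝ :=
  ∫ t in Set.Iic x, stdNormalPDF t

/-!
On the segment between `x` and `x * y` every point has modulus at least `u = |x| * min 1 y`,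
so by the mean value theorem `|Φ(x y) - Φ(x)| ≤ φ(u) * |x| * |1 - y|`. Since
`|1 - y| = min 1 y * max |1 - y| |1 - 1 / y|`, this is `u φ(u) * max |1 - y| |1 - 1 / y|`,
and `u φ(u) ≤ (2π e)^{-1/2} ≤ 1/4`.
-/

open Real Set

lemma integrable_stdNormalPDF : MeasureTheory.Integrable stdNormalPDF := by
  have h := (integrable_exp_neg_mul_sq (b := 1 / 2) (by norm_num)).div_const (√(2 * π))
  convert h using 2 with t
  unfold stdNormalPDF
  ring_nf

lemma stdNormalPDF_abs (t : ℝ) : stdNormalPDF |t| = stdNormalPDF t := by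
  rw [stdNormalPDF, stdNormalPDF, sq_abs]

lemma stdNormalPDF_le_of_abs_le {s t : ℝ} (h : |s| ≤ |t|) : stdNormalPDF t ≤ stdNormalPDF s := by
  have hsq : s ^ 2 ≤ t ^ 2 := sq_le_sq.mpr h
  unfold stdNormalPDF
  gcongr

lemma mul_exp_neg_sq_div_two_le (u : ℝ) : u * exp (-u ^ 2 / 2) ≤ exp (-(1 / 2)) := by
  -- `u ≤ (u² + 1) / 2 ≤ exp ((u² - 1) / 2)`
  have hu : u ≤ exp ((u ^ 2 - 1) / 2) := by
    nlinarith [add_one_le_exp ((u ^ 2 - 1) / 2), sq_nonneg (u - 1)]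
  calc u * exp (-u ^ 2 / 2) ≤ exp ((u ^ 2 - 1) / 2) * exp (-u ^ 2 / 2) := by gcongr
    _ = exp (-(1 / 2)) := by rw [← exp_add]; ring_nf

lemma exp_neg_half_le_quarter_mul_sqrt_two_pi : exp (-(1 / 2)) ≤ 0.25 * √(2 * π) := by
  have hπ := pi_gt_d6
  have he := exp_one_gt_d9
  have hsq : exp (-(1 / 2)) ^ 2 * exp 1 = 1 := by
    rw [← exp_nat_mul, ← exp_add]; norm_num
  have h : (4 * exp (-(1 / 2))) ^ 2 ≤ 2 * π := by nlinarith [exp_pos (-(1 / 2))]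
  calc exp (-(1 / 2)) = (4 * exp (-(1 / 2))) / 4 := by ring
    _ ≤ √(2 * π) / 4 := by gcongr; exact le_sqrt_of_sq_le h
    _ = 0.25 * √(2 * π) := by ring

lemma mul_stdNormalPDF_le (u : ℝ) : u * stdNormalPDF u ≤ 0.25 := by
  have hpos : 0 < √(2 * π) := by positivity
  rw [stdNormalPDF, mul_div_assoc', div_le_iff₀ hpos]
  exact (mul_exp_neg_sq_div_two_le u).trans exp_neg_half_le_quarter_mul_sqrt_two_pi

lemma stdNormalCDF_sub_stdNormalCDF (a b : ℝ) :
    stdNormalCDF b - stdNormalCDF a = ∫ t in a..b, stdNormalPDF t :=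
  intervalIntegral.integral_Iic_sub_Iic integrable_stdNormalPDF.integrableOn
    integrable_stdNormalPDF.integrableOn

lemma abs_stdNormalCDF_sub_le {a b c : ℝ} (hc : ∀ t ∈ uIcc a b, |c| ≤ |t|) :
    |stdNormalCDF b - stdNormalCDF a| ≤ stdNormalPDF c * |b - a| := by
  rw [stdNormalCDF_sub_stdNormalCDF, ← norm_eq_abs]
  refine intervalIntegral.norm_integral_le_of_norm_le_const fun t ht => ?_
  have hφ : 0 ≤ stdNormalPDF t := by unfold stdNormalPDF; positivity
  rw [norm_of_nonneg hφ]
  exact stdNormalPDF_le_of_abs_le (hc t (uIoc_subset_uIcc ht))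

lemma abs_mul_min_le_abs_of_mem_uIcc {x y t : ℝ} (hy : 0 ≤ y) (ht : t ∈ uIcc x (x * y)) :
    |x * min 1 y| ≤ |t| := by
  have h1 := min_le_left 1 y
  have h2 := min_le_right 1 y
  have h0 : 0 ≤ min 1 y := le_min zero_le_one hy
  rw [abs_mul, abs_of_nonneg h0]
  rcases le_total 0 x with hx | hx <;> rw [mem_uIcc] at ht
  · rw [abs_of_nonneg hx]
    rcases ht with ⟨hxt, -⟩ | ⟨hxt, -⟩ <;> nlinarith [le_abs_self t]
  · rw [abs_of_nonpos hx]
    rcases ht with ⟨-, htx⟩ | ⟨-, htx⟩ <;> nlinarith [neg_abs_le t]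

lemma abs_one_sub_eq_min_mul_max {y : ℝ} (hy : 0 < y) :
    |1 - y| = min 1 y * max |1 - y| |1 - 1 / y| := by
  rcases le_total y 1 with h | h
  · have hinv : 1 ≤ 1 / y := by rw [le_div_iff₀ hy]; linarith
    have hle : 1 - y ≤ 1 / y - 1 := by
      have : y * (1 / y) = 1 := by field_simp
      nlinarith
    rw [min_eq_right h, abs_of_nonneg (by linarith : 0 ≤ 1 - y),
      abs_of_nonpos (by linarith : 1 - 1 / y ≤ 0), max_eq_right (by linarith)]
    field_simp
    ring
  · have hinv : 1 / y ≤ 1 := by rw [div_le_iff₀ hy]; linarith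
    have hle : 1 - 1 / y ≤ y - 1 := by
      have : y * (1 / y) = 1 := by field_simp
      nlinarith
    rw [min_eq_left h, one_mul, abs_of_nonpos (by linarith : 1 - y ≤ 0),
      abs_of_nonneg (by linarith : 0 ≤ 1 - 1 / y), max_eq_left (by linarith)]

theorem normal_cdf_scale_bound (x y : ℝ) (hy : 0 < y) :
    |stdNormalCDF (x * y) - stdNormalCDF x| ≤
      0.25 * max |1 - y| |1 - 1 / y| := by
  set M := max |1 - y| |1 - 1 / y|
  have hstep : |x * y - x| = |x * min 1 y| * M := by
    rw [show x * y - x = -(x * (1 - y)) by ring, abs_neg, abs_mul, abs_one_sub_eq_min_mul_max hy,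
      abs_mul, abs_of_pos (lt_min one_pos hy), mul_assoc]
  calc |stdNormalCDF (x * y) - stdNormalCDF x| ≤ stdNormalPDF (x * min 1 y) * |x * y - x| :=
        abs_stdNormalCDF_sub_le fun t ht => abs_mul_min_le_abs_of_mem_uIcc hy.le ht
    _ = (|x * min 1 y| * stdNormalPDF |x * min 1 y|) * M := by
        rw [hstep, stdNormalPDF_abs]; ring
    _ ≤ 0.25 * M := by gcongr; exact mul_stdNormalPDF_le _
end

section
/- Let n1, n2 > 0 and c1, c2, d1, d2 ≥ 0 with d1, d2 > 0. Then |sqrt((n1·c2² + n2·c1²)/(n1·d2² + n2·d1²)) − 1| ≤ |c1/d1 − 1| + |c2/d2 − 1|. -/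
/-!
With `x = (√n₁ c₂, √n₂ c₁)` and `y = (√n₁ d₂, √n₂ d₁)` the ratio under the root is `‖x‖² / ‖y‖²`
for the Euclidean norm. The reverse triangle inequality bounds `|‖x‖ - ‖y‖|` by
`‖x - y‖ ≤ ∑ |xᵢ - yᵢ| = ∑ |yᵢ| |xᵢ / yᵢ - 1|`, and `|yᵢ| ≤ ‖y‖`; dividing by `‖y‖` gives the
claim, for any number of groups.
-/

open Finset

namespace EuclideanSpace

variable {ι : Type*} [Fintype ι]

theorem norm_toLp_real (f : ι → ℝ) : ‖WithLp.toLp 2 f‖ = √(∑ i, f i ^ 2) := by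
  simp [EuclideanSpace.norm_eq]

theorem norm_le_sum_abs (x : EuclideanSpace ℝ ι) : ‖x‖ ≤ ∑ i, |x i| := by
  rw [EuclideanSpace.norm_eq, Real.sqrt_le_left (by positivity)]
  simpa using sum_sq_le_sq_sum_of_nonneg (s := univ) (f := fun i => |x i|) fun i _ => abs_nonneg _

theorem abs_norm_div_norm_sub_one_le [Nonempty ι] (x y : EuclideanSpace ℝ ι)
    (hy : ∀ i, y i ≠ 0) : |‖x‖ / ‖y‖ - 1| ≤ ∑ i, |x i / y i - 1| := by
  have hy_pos : 0 < ‖y‖ :=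
    norm_pos_iff.2 fun h => hy (Classical.arbitrary ι) (by simp [h])
  have key : |‖x‖ - ‖y‖| ≤ ‖y‖ * ∑ i, |x i / y i - 1| := calc
    |‖x‖ - ‖y‖| ≤ ‖x - y‖ := abs_norm_sub_norm_le x y
    _ ≤ ∑ i, |x i - y i| := by simpa using norm_le_sum_abs (x - y)
    _ = ∑ i, |y i| * |x i / y i - 1| := by
      refine sum_congr rfl fun i _ => ?_
      rw [← abs_mul, mul_sub, mul_div_cancel₀ _ (hy i), mul_one]
    _ ≤ ∑ i, ‖y‖ * |x i / y i - 1| := by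
      gcongr with i
      simpa using PiLp.norm_apply_le y i
    _ = ‖y‖ * ∑ i, |x i / y i - 1| := (mul_sum ..).symm
  rwa [div_sub_one hy_pos.ne', abs_div, abs_of_pos hy_pos, div_le_iff₀' hy_pos]

end EuclideanSpace

theorem abs_sqrt_weighted_sum_sq_div_sub_one_le {ι : Type*} [Fintype ι] [Nonempty ι]
    (w c d : ι → ℝ) (hw : ∀ i, 0 < w i) (hd : ∀ i, d i ≠ 0) :
    |√((∑ i, w i * c i ^ 2) / ∑ i, w i * d i ^ 2) - 1| ≤ ∑ i, |c i / d i - 1| := by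
  have hnorm (f : ι → ℝ) : ‖WithLp.toLp 2 fun i => √(w i) * f i‖ = √(∑ i, w i * f i ^ 2) := by
    simp only [EuclideanSpace.norm_toLp_real, mul_pow, Real.sq_sqrt (hw _).le]
  have hsqrt_w (i : ι) : √(w i) ≠ 0 := (Real.sqrt_pos.2 (hw i)).ne'
  rw [Real.sqrt_div' _ (sum_nonneg fun i _ => mul_nonneg (hw i).le (sq_nonneg _)), ← hnorm,
    ← hnorm]
  convert EuclideanSpace.abs_norm_div_norm_sub_one_le (WithLp.toLp 2 fun i => √(w i) * c i)
    (WithLp.toLp 2 fun i => √(w i) * d i) fun i => mul_ne_zero (hsqrt_w i) (hd i) using 4 with i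
  exact (mul_div_mul_left _ _ (hsqrt_w i)).symm

theorem pooled_sd_ratio_bound_general (n1 n2 c1 c2 d1 d2 : ℝ)
    (hn1 : 0 < n1) (hn2 : 0 < n2)
    (hd1 : 0 < d1) (hd2 : 0 < d2) :
    |Real.sqrt ((n1 * c2 ^ 2 + n2 * c1 ^ 2) / (n1 * d2 ^ 2 + n2 * d1 ^ 2)) - 1| ≤
      |c1 / d1 - 1| + |c2 / d2 - 1| := by
  have h := abs_sqrt_weighted_sum_sq_div_sub_one_le ![n1, n2] ![c2, c1] ![d2, d1]
    (by simp [Fin.forall_fin_two, hn1, hn2]) (by simp [Fin.forall_fin_two, hd1.ne', hd2.ne'])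
  simpa [Fin.sum_univ_two, add_comm |c2 / d2 - 1|] using h

theorem pooled_sd_ratio_bound (n1 n2 c1 c2 d1 d2 : ℝ)
    (hn1 : 0 < n1) (hn2 : 0 < n2) (hc1 : 0 ≤ c1) (hc2 : 0 ≤ c2)
    (hd1 : 0 < d1) (hd2 : 0 < d2) :
    |Real.sqrt ((n1 * c2 ^ 2 + n2 * c1 ^ 2) / (n1 * d2 ^ 2 + n2 * d1 ^ 2)) - 1| ≤
      |c1 / d1 - 1| + |c2 / d2 - 1| :=
  pooled_sd_ratio_bound_general n1 n2 c1 c2 d1 d2 hn1 hn2 hd1 hd2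
end

section
/- Let G be a distribution function on ℝ with at most countably many discontinuity points T₁, T₂, … with jump sizes r₁, r₂, …. Define the transformation R(t) = t + Σⱼ rⱼ·1{Tⱼ ≤ t}. If Y has distribution G and U is an independent uniform[0,1] variable, then Z = Y + Σⱼ rⱼ[1{Tⱼ < Y} + 1{Tⱼ = Y}·U] has a continuous distribution function H, and G(t) = H(R(t)) for all t ∈ ℝ. -/
/-!
Let `ρ` be `ν` restricted to its atoms `{T j}`. The map
`atomSpread ρ y u = y + ρ (Iio y) + ρ {y} * u` sends `{y} × [0, 1]` onto an interval
`[atomSpread ρ y 0, atomSpread ρ y 1]` whose length is the jump of `G` at `y`, and for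
`y < y'` the interval of `y` lies strictly to the left of that of `y'`. Since
`Z = atomSpread ρ Y U` and `R t = atomSpread ρ t 1`, this ordering gives `Z ≤ R t ↔ Y ≤ t`
whenever `U ∈ [0, 1]`, hence `G = H ∘ R`. It also shows that a value `s` of `Z` pins down `Y`,
and then `U` as well unless the atom of `ρ` at `Y` is zero; so `{Z = s}` lies in a null event
`{U = c}` or `{Y = y}`, and `H` is continuous.
-/

open MeasureTheory ProbabilityTheory Set

section JumpSums

variable {α : Type*} [MeasurableSpace α] [MeasurableSingletonClass α] {ν : Measure α}
  {T : ℕ → α}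

lemma hasSum_measure_inter_singleton (hT : Function.Injective T) (s : Set α) :
    HasSum (fun j ↦ ν (s ∩ {T j})) (ν.restrict (range T) s) := by
  rw [Measure.restrict_apply' (countable_range T).measurableSet, ← iUnion_singleton_eq_range,
    inter_iUnion, measure_iUnion]
  · exact ENNReal.summable.hasSum
  · exact fun i j hij ↦
      (disjoint_singleton.2 (hT.ne hij)).mono inter_subset_right inter_subset_right
  · exact fun j ↦ (subsingleton_singleton.anti inter_subset_right).measurableSet

lemma hasSum_ite_measureReal_singleton [IsFiniteMeasure ν] (hT : Function.Injective T)
    (s : Set α) [DecidablePred (· ∈ s)] :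
    HasSum (fun j ↦ if T j ∈ s then ν.real {T j} else 0) ((ν.restrict (range T)).real s) := by
  have h := hasSum_measure_inter_singleton (ν := ν) hT s
  have hfin : ∑' j, ν (s ∩ {T j}) ≠ ⊤ := h.tsum_eq ▸ measure_ne_top _ _
  convert ENNReal.hasSum_toReal hfin using 1
  · ext j; split_ifs with hj <;> simp [hj, measureReal_def]
  · rw [measureReal_def, ← h.tsum_eq, ENNReal.tsum_toReal_eq fun j ↦ ?_]
    exact measure_ne_top _ _

lemma restrict_apply_singleton_of_forall_notMem {D : Set α} (h : ∀ x ∉ D, ν {x} = 0)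
    (x : α) : ν.restrict D {x} = ν {x} := by
  rw [Measure.restrict_apply (measurableSet_singleton x)]
  by_cases hx : x ∈ D
  · rw [inter_eq_left.2 (singleton_subset_iff.2 hx)]
  · rw [h x hx, singleton_inter_eq_empty.2 hx, measure_empty]

end JumpSums

noncomputable def atomSpread (ρ : Measure ℝ) (y u : ℝ) : ℝ :=
  y + ρ.real (Iio y) + ρ.real {y} * u

section atomSpread

variable {ρ : Measure ℝ}

lemma atomSpread_mem_Icc {y u : ℝ} (hu : u ∈ Icc 0 1) :
    atomSpread ρ y u ∈ Icc (atomSpread ρ y 0) (atomSpread ρ y 1) := by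
  have := measureReal_nonneg (μ := ρ) (s := {y})
  constructor <;> simp only [atomSpread] <;> nlinarith [hu.1, hu.2]

variable [IsFiniteMeasure ρ]

lemma atomSpread_one (y : ℝ) :
    atomSpread ρ y 1 = y + ρ.real (Iic y) := by
  rw [atomSpread, ← Iio_union_right, measureReal_union (by simp) (measurableSet_singleton y)]
  ring

lemma atomSpread_one_lt_atomSpread_zero {y y' : ℝ} (h : y < y') :
    atomSpread ρ y 1 < atomSpread ρ y' 0 := by
  have : ρ.real (Iic y) ≤ ρ.real (Iio y') := measureReal_mono (Iic_subset_Iio.2 h)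
  rw [atomSpread_one]; simp only [atomSpread]; linarith

lemma atomSpread_lt_atomSpread {y y' u u' : ℝ} (hu : u ∈ Icc 0 1) (hu' : u' ∈ Icc 0 1)
    (h : y < y') : atomSpread ρ y u < atomSpread ρ y' u' :=
  (atomSpread_mem_Icc hu).2.trans_lt <|
    (atomSpread_one_lt_atomSpread_zero h).trans_le (atomSpread_mem_Icc hu').1

lemma strictMono_atomSpread_one : StrictMono (atomSpread ρ · 1) := fun _ _ ↦
  atomSpread_lt_atomSpread (right_mem_Icc.2 zero_le_one) (right_mem_Icc.2 zero_le_one)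

lemma atomSpread_le_atomSpread_one_iff {y u t : ℝ} (hu : u ∈ Icc 0 1) :
    atomSpread ρ y u ≤ atomSpread ρ t 1 ↔ y ≤ t :=
  ⟨fun h ↦ not_lt.1 fun hty ↦
      (atomSpread_lt_atomSpread (right_mem_Icc.2 zero_le_one) hu hty).not_ge h,
    fun h ↦ (atomSpread_mem_Icc hu).2.trans (strictMono_atomSpread_one.monotone h)⟩

lemma eq_of_atomSpread_eq {y y' u u' : ℝ} (hu : u ∈ Icc 0 1) (hu' : u' ∈ Icc 0 1)
    (h : atomSpread ρ y u = atomSpread ρ y' u') : y = y' :=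
  le_antisymm (not_lt.1 fun hlt ↦ (atomSpread_lt_atomSpread hu' hu hlt).ne' h)
    (not_lt.1 fun hlt ↦ (atomSpread_lt_atomSpread hu hu' hlt).ne h)

lemma measurable_atomSpread : Measurable (Function.uncurry (atomSpread ρ)) := by
  have hIio : Measurable fun y ↦ ρ.real (Iio y) :=
    Monotone.measurable fun _ _ h ↦ measureReal_mono (Iio_subset_Iio h)
  have hatom : Measurable fun y ↦ ρ.real {y} := by
    have : (fun y ↦ ρ.real {y}) = fun y ↦ atomSpread ρ y 1 - (y + ρ.real (Iio y)) := by
      ext y; simp [atomSpread]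
    rw [this]
    exact strictMono_atomSpread_one.monotone.measurable.sub (measurable_id.add hIio)
  exact ((measurable_fst.add (hIio.comp measurable_fst)).add
    ((hatom.comp measurable_fst).mul measurable_snd))

variable (ρ) in
lemma exists_eq_of_atomSpread_eq (s : ℝ) :
    ∃ y₀ c : ℝ, ∀ y u, u ∈ Icc 0 1 → atomSpread ρ y u = s →
      y = y₀ ∧ (u = c ∨ ρ.real {y₀} = 0) := by
  by_cases hs : ∃ y₀ u₀, u₀ ∈ Icc 0 1 ∧ atomSpread ρ y₀ u₀ = s
  · obtain ⟨y₀, u₀, hu₀, rfl⟩ := hs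
    refine ⟨y₀, u₀, fun y u hu h ↦ ?_⟩
    obtain rfl := eq_of_atomSpread_eq hu hu₀ h
    refine ⟨rfl, ?_⟩
    simpa [atomSpread] using h
  · push Not at hs
    exact ⟨0, 0, fun y u hu h ↦ absurd h (hs y u hu)⟩

end atomSpread

section JumpSumsOnReal

variable {ν : Measure ℝ} [IsFiniteMeasure ν] {T : ℕ → ℝ}

lemma atomSpread_eq_add_tsum (hT : Function.Injective T) (y u : ℝ) :
    atomSpread (ν.restrict (range T)) y u = y + ∑' j, ν.real {T j} *
      ((if T j < y then (1 : ℝ) else 0) + (if T j = y then (1 : ℝ) else 0) * u) := by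
  rw [atomSpread, add_assoc, ← ((hasSum_ite_measureReal_singleton hT (Iio y)).add
    ((hasSum_ite_measureReal_singleton hT {y}).mul_right u)).tsum_eq]
  congr 2 with j
  simp only [mem_Iio, mem_singleton_iff]
  split_ifs <;> ring

lemma atomSpread_one_eq_add_tsum (hT : Function.Injective T) (t : ℝ) :
    atomSpread (ν.restrict (range T)) t 1 =
      t + ∑' j, if T j ≤ t then ν.real {T j} else 0 := by
  rw [atomSpread_one, ← (hasSum_ite_measureReal_singleton hT (Iic t)).tsum_eq]
  rfl

end JumpSumsOnReal

lemma ProbabilityTheory.continuous_cdf (μ : Measure ℝ) [IsProbabilityMeasure μ]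
    [NullSingletonClass μ] : Continuous (cdf μ) := by
  refine continuous_iff_continuousAt.2 fun x ↦ ?_
  rw [(monotone_cdf μ).continuousAt_iff_leftLim_eq_rightLim, (cdf μ).rightLim_eq]
  have hjump := (cdf μ).measure_singleton x
  rw [measure_cdf, measure_singleton, eq_comm, ENNReal.ofReal_eq_zero] at hjump
  linarith [(monotone_cdf μ).leftLim_le (le_refl x)]

section RandomVariables

variable {Ω : Type*} [MeasurableSpace Ω] {μ : Measure Ω} {ρ : Measure ℝ} [IsFiniteMeasure ρ]
  {Y U : Ω → ℝ}

lemma measure_atomSpread_le_atomSpread_one (hU : ∀ᵐ ω ∂μ, U ω ∈ Icc 0 1) (t : ℝ) :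
    μ {ω | atomSpread ρ (Y ω) (U ω) ≤ atomSpread ρ t 1} = μ {ω | Y ω ≤ t} := by
  refine measure_congr (Filter.eventuallyEq_set.2 ?_)
  filter_upwards [hU] with ω hω
  exact atomSpread_le_atomSpread_one_iff hω

lemma measure_atomSpread_eq_null (hU : ∀ᵐ ω ∂μ, U ω ∈ Icc 0 1)
    (hU_atom : ∀ c, μ (U ⁻¹' {c}) = 0)
    (hY_atom : ∀ y, ρ.real {y} = 0 → μ (Y ⁻¹' {y}) = 0)
    (s : ℝ) : μ {ω | atomSpread ρ (Y ω) (U ω) = s} = 0 := by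
  obtain ⟨y₀, c, hfiber⟩ := exists_eq_of_atomSpread_eq ρ s
  rcases eq_or_ne (ρ.real {y₀}) 0 with hy₀ | hy₀
  · refine measure_mono_null_ae ?_ (hY_atom y₀ hy₀)
    filter_upwards [hU] with ω hω hs
    exact (hfiber _ _ hω hs).1
  · refine measure_mono_null_ae ?_ (hU_atom c)
    filter_upwards [hU] with ω hω hs
    exact (hfiber _ _ hω hs).2.resolve_right hy₀

end RandomVariables

theorem atom_spreading_general
    {Ω : Type*} [MeasurableSpace Ω] (μ : Measure Ω) [IsProbabilityMeasure μ]
    (Y U : Ω → ℝ) (hY : Measurable Y) (hU : Measurable U)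
    (ν : Measure ℝ) [IsProbabilityMeasure ν]
    (hYlaw : Measure.map Y μ = ν)
    (hUlaw : Measure.map U μ = volume.restrict (Icc (0:ℝ) 1))
    (T : ℕ → ℝ) (hTinj : Function.Injective T)
    (r : ℕ → ℝ) (hr : ∀ j, r j = (ν {T j}).toReal)
    (hcont : ∀ t ∉ Set.range T, ν {t} = 0)
    (R : ℝ → ℝ) (hR : ∀ t, R t = t + ∑' j, if T j ≤ t then r j else 0)
    (Z : Ω → ℝ)
    (hZ : ∀ ω, Z ω = Y ω + ∑' j,
      r j * ((if T j < Y ω then (1:ℝ) else 0) +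
             (if T j = Y ω then (1:ℝ) else 0) * U ω))
    (G H : ℝ → ℝ)
    (hG : ∀ t, G t = (ν (Iic t)).toReal)
    (hH : ∀ s, H s = (Measure.map Z μ (Iic s)).toReal) :
    Continuous H ∧ ∀ t, G t = H (R t) := by
  obtain rfl : r = fun j ↦ ν.real {T j} := funext hr
  set ρ := ν.restrict (range T)
  have hRρ (t : ℝ) : R t = atomSpread ρ t 1 := by rw [hR, atomSpread_one_eq_add_tsum hTinj]
  have hZ_eq : Z = fun ω ↦ atomSpread ρ (Y ω) (U ω) :=
    funext fun ω ↦ by rw [hZ, atomSpread_eq_add_tsum hTinj]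
  have hZm : Measurable Z := hZ_eq ▸ measurable_atomSpread.comp (hY.prodMk hU)
  have hU_Icc : ∀ᵐ ω ∂μ, U ω ∈ Icc 0 1 :=
    (ae_map_iff hU.aemeasurable measurableSet_Icc).1 (hUlaw ▸ ae_restrict_mem measurableSet_Icc)
  have hU_atom (c : ℝ) : μ (U ⁻¹' {c}) = 0 := by
    rw [← Measure.map_apply hU (measurableSet_singleton c), hUlaw]
    exact measure_singleton c
  have hY_atom (y : ℝ) (hy : ρ.real {y} = 0) : μ (Y ⁻¹' {y}) = 0 := by
    rw [← Measure.map_apply hY (measurableSet_singleton y), hYlaw,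
      ← restrict_apply_singleton_of_forall_notMem hcont]
    exact (measureReal_eq_zero_iff).1 hy
  have := Measure.isProbabilityMeasure_map (μ := μ) hZm.aemeasurable
  have : NullSingletonClass (μ.map Z) := ⟨fun s ↦ by
    rw [Measure.map_apply hZm (measurableSet_singleton s), hZ_eq]
    exact measure_atomSpread_eq_null hU_Icc hU_atom hY_atom s⟩
  have hH_cdf : H = cdf (μ.map Z) := funext fun s ↦ by rw [hH, cdf_eq_real, measureReal_def]
  refine ⟨hH_cdf ▸ continuous_cdf _, fun t ↦ ?_⟩
  rw [hG, hH, hRρ, ← hYlaw, Measure.map_apply hY measurableSet_Iic,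
    Measure.map_apply hZm measurableSet_Iic, hZ_eq]
  exact congrArg ENNReal.toReal (measure_atomSpread_le_atomSpread_one hU_Icc t).symm

/-- Atom-spreading: if `Y` has distribution function `G` with discontinuity
points `T j` and jump sizes `r j`, `U` is an independent uniform `[0,1]`
variable, and `Z = Y + ∑ⱼ rⱼ (1{Tⱼ < Y} + 1{Tⱼ = Y} U)`, then `Z` has a
continuous distribution function `H` and `G(t) = H(R(t))` where
`R(t) = t + ∑ⱼ rⱼ 1{Tⱼ ≤ t}`. -/
theorem atom_spreading
    {Ω : Type*} [MeasurableSpace Ω] (μ : Measure Ω) [IsProbabilityMeasure μ]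
    (Y U : Ω → ℝ) (hY : Measurable Y) (hU : Measurable U)
    (ν : Measure ℝ) [IsProbabilityMeasure ν]
    (hYlaw : Measure.map Y μ = ν)
    (hUlaw : Measure.map U μ = volume.restrict (Icc (0:ℝ) 1))
    (hindep : IndepFun Y U μ)
    (T : ℕ → ℝ) (hTinj : Function.Injective T)
    (r : ℕ → ℝ) (hr : ∀ j, r j = (ν {T j}).toReal)
    (hcont : ∀ t ∉ Set.range T, ν {t} = 0)
    (R : ℝ → ℝ) (hR : ∀ t, R t = t + ∑' j, if T j ≤ t then r j else 0)
    (Z : Ω → ℝ)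
    (hZ : ∀ ω, Z ω = Y ω + ∑' j,
      r j * ((if T j < Y ω then (1:ℝ) else 0) +
             (if T j = Y ω then (1:ℝ) else 0) * U ω))
    (G H : ℝ → ℝ)
    (hG : ∀ t, G t = (ν (Iic t)).toReal)
    (hH : ∀ s, H s = (Measure.map Z μ (Iic s)).toReal) :
    Continuous H ∧ ∀ t, G t = H (R t) :=
  atom_spreading_general μ Y U hY hU ν hYlaw hUlaw T hTinj r hr hcont R hR Z hZ G H hG hH
end
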